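/- arXiv:1301.4786 — 2 statements merged into one kernel-verified Lean document; each statement's English description precedes it below -/
import Mathlib

section
/- (It is optimal to store excess energy locally rather than transfer it to the other base station's storage.) Suppose Δ ≥ 0 with σ₁ + α·Δ ≤ S_max and σ₂ + α·β·Δ ≤ S_max. Then J*_k(σ₁ + α·Δ, σ₂) ≤ J*_k(σ₁, σ₂ + α·β·Δ). -/
/-- A feasible policy for the two-base-station energy cooperation problem over
slots `t ∈ {k, …, N}` from initial storage state `(σ₁, σ₂)`. -/
def Feasible (α β Smax : ℝ) (k N : ℕ) (E₁ E₂ : ℕ → ℝ) (σ₁ σ₂ : ℝ)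
    (w₁ w₂ c₁ c₂ d₁ d₂ x₁₂ x₂₁ s₁ s₂ : ℕ → ℝ) : Prop :=
  s₁ k = σ₁ ∧ s₂ k = σ₂ ∧
  (∀ t ∈ Finset.Icc k N,
    0 ≤ w₁ t ∧ 0 ≤ w₂ t ∧ 0 ≤ c₁ t ∧ 0 ≤ c₂ t ∧ 0 ≤ d₁ t ∧ 0 ≤ d₂ t ∧
      0 ≤ x₁₂ t ∧ 0 ≤ x₂₁ t ∧
      s₁ (t + 1) = s₁ t + α * c₁ t - d₁ t ∧
      s₂ (t + 1) = s₂ t + α * c₂ t - d₂ t ∧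
      d₁ t ≤ s₁ t ∧ d₂ t ≤ s₂ t ∧
      0 ≤ E₁ t + w₁ t - c₁ t + α * d₁ t - x₁₂ t + β * x₂₁ t ∧
      0 ≤ E₂ t + w₂ t - c₂ t + α * d₂ t - x₂₁ t + β * x₁₂ t) ∧
  (∀ t ∈ Finset.Icc k (N + 1),
    0 ≤ s₁ t ∧ s₁ t ≤ Smax ∧ 0 ≤ s₂ t ∧ s₂ t ≤ Smax)

/-- Optimal cost `J*_k(σ₁, σ₂)`: the infimum of total grid draw over feasible policies. -/
noncomputable def Jstar (α β Smax : ℝ) (k N : ℕ) (E₁ E₂ : ℕ → ℝ) (σ₁ σ₂ : ℝ) : ℝ :=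
  sInf {r : ℝ | ∃ w₁ w₂ c₁ c₂ d₁ d₂ x₁₂ x₂₁ s₁ s₂ : ℕ → ℝ,
    Feasible α β Smax k N E₁ E₂ σ₁ σ₂ w₁ w₂ c₁ c₂ d₁ d₂ x₁₂ x₂₁ s₁ s₂ ∧
    (∑ t ∈ Finset.Icc k N, (w₁ t + w₂ t)) = r}

/-! The extra energy `a` that station 1 holds instead of station 2's `β * a` is released lazily:
when station 2 runs short of its planned discharge, station 1 discharges `z` more and ships the
energy `α * z` across, where it arrives as the missing `α * β * z`; when station 1 would overflow,
it charges `u` less and ships `u` across, where station 2 stores it as the missing `α * β * u`.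
Grid draws are unchanged, so every cost achievable from `(σ₁, σ₂ + β * a)` is achievable from
`(σ₁ + a, σ₂)`. -/

open Finset

def costSet (α β Smax : ℝ) (k N : ℕ) (E₁ E₂ : ℕ → ℝ) (σ₁ σ₂ : ℝ) : Set ℝ :=
  {r : ℝ | ∃ w₁ w₂ c₁ c₂ d₁ d₂ x₁₂ x₂₁ s₁ s₂ : ℕ → ℝ,
    Feasible α β Smax k N E₁ E₂ σ₁ σ₂ w₁ w₂ c₁ c₂ d₁ d₂ x₁₂ x₂₁ s₁ s₂ ∧
    (∑ t ∈ Icc k N, (w₁ t + w₂ t)) = r}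

section CostSet

variable {α β Smax : ℝ} {k N : ℕ} {E₁ E₂ : ℕ → ℝ} {σ₁ σ₂ : ℝ}

theorem Jstar_eq_sInf_costSet :
    Jstar α β Smax k N E₁ E₂ σ₁ σ₂ = sInf (costSet α β Smax k N E₁ E₂ σ₁ σ₂) :=
  rfl

theorem costSet_bddBelow : BddBelow (costSet α β Smax k N E₁ E₂ σ₁ σ₂) := by
  refine ⟨0, ?_⟩
  rintro r ⟨w₁, w₂, _, _, _, _, _, _, _, _, ⟨_, _, hslot, _⟩, rfl⟩
  exact sum_nonneg fun t ht => add_nonneg (hslot t ht).1 (hslot t ht).2.1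

theorem feasible_gridOnly (hσ₁ : 0 ≤ σ₁ ∧ σ₁ ≤ Smax) (hσ₂ : 0 ≤ σ₂ ∧ σ₂ ≤ Smax) :
    Feasible α β Smax k N E₁ E₂ σ₁ σ₂ (fun t => max 0 (-E₁ t)) (fun t => max 0 (-E₂ t))
      0 0 0 0 0 0 (fun _ => σ₁) (fun _ => σ₂) := by
  refine ⟨rfl, rfl, fun t _ => ?_, fun _ _ => ⟨hσ₁.1, hσ₁.2, hσ₂.1, hσ₂.2⟩⟩
  simp only [Pi.zero_apply, mul_zero, add_zero, sub_zero, le_refl, true_and]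
  exact ⟨le_max_left _ _, le_max_left _ _, hσ₁.1, hσ₂.1,
    by linarith [le_max_right 0 (-E₁ t)], by linarith [le_max_right 0 (-E₂ t)]⟩

theorem costSet_nonempty (hσ₁ : 0 ≤ σ₁ ∧ σ₁ ≤ Smax) (hσ₂ : 0 ≤ σ₂ ∧ σ₂ ≤ Smax) :
    (costSet α β Smax k N E₁ E₂ σ₁ σ₂).Nonempty :=
  ⟨_, _, _, _, _, _, _, _, _, _, _, feasible_gridOnly hσ₁ hσ₂, rfl⟩

end CostSet

theorem exists_mul_eq_of_le_mul {p q r : ℝ} (hq : 0 ≤ q) (hp : 0 ≤ p) (hr : 0 ≤ r)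
    (hpqr : p ≤ q * r) : ∃ x, 0 ≤ x ∧ x ≤ r ∧ q * x = p := by
  rcases hq.eq_or_lt with rfl | hq
  · exact ⟨0, le_rfl, hr, by linarith [zero_mul r]⟩
  · exact ⟨p / q, div_nonneg hp hq.le, (div_le_iff₀' hq).2 hpqr, mul_div_cancel₀ p hq.ne'⟩

/-- Station 1 may hold `a` more and station 2 `β * a` less than the levels `s₁`, `s₂`. -/
def ShiftAdmissible (β Smax a s₁ s₂ : ℝ) : Prop :=
  0 ≤ a ∧ β * a ≤ s₂ ∧ s₁ + a ≤ Smax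

section Slot

variable {α β Smax a s₁ s₂ c₁ c₂ d₁ d₂ : ℝ}

theorem exists_shortfall_cover (hβ : 0 ≤ β) (ha : 0 ≤ a) (has : β * a ≤ s₂) (hd₂ : 0 ≤ d₂)
    (hds : d₂ ≤ s₂) : ∃ z, 0 ≤ z ∧ z ≤ a ∧ β * z ≤ d₂ ∧ d₂ - β * z ≤ s₂ - β * a := by
  obtain ⟨z, hz₀, hza, hz⟩ := exists_mul_eq_of_le_mul hβ (le_max_left 0 (d₂ - (s₂ - β * a))) ha
    (max_le (mul_nonneg hβ ha) (by linarith))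
  refine ⟨z, hz₀, hza, ?_, ?_⟩ <;> rw [hz]
  · exact max_le hd₂ (by linarith)
  · linarith [le_max_right 0 (d₂ - (s₂ - β * a))]

theorem exists_overflow_release {b s₁' : ℝ} (hα : 0 ≤ α) (hb : 0 ≤ b) (hc₁ : 0 ≤ c₁)
    (hs₁' : s₁' ≤ Smax) (hcap : s₁' + b - α * c₁ ≤ Smax) :
    ∃ u, 0 ≤ u ∧ u ≤ c₁ ∧ 0 ≤ b - α * u ∧ s₁' + (b - α * u) ≤ Smax := by
  obtain ⟨u, hu₀, huc, hu⟩ := exists_mul_eq_of_le_mul hα (le_max_left 0 (s₁' + b - Smax)) hc₁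
    (max_le (mul_nonneg hα hc₁) (by linarith))
  refine ⟨u, hu₀, huc, ?_, ?_⟩ <;> rw [hu]
  · exact sub_nonneg.2 (max_le hb (by linarith))
  · linarith [le_max_right 0 (s₁' + b - Smax)]

theorem ShiftAdmissible.exists_slot_adjustment (hα : 0 ≤ α) (hβ : 0 ≤ β)
    (ha : ShiftAdmissible β Smax a s₁ s₂) (hc₁ : 0 ≤ c₁) (hc₂ : 0 ≤ c₂) (hd₁ : 0 ≤ d₁)
    (hd₂ : 0 ≤ d₂) (hds : d₂ ≤ s₂) (hs₁' : s₁ + α * c₁ - d₁ ≤ Smax) :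
    ∃ z u, (0 ≤ z ∧ z ≤ a ∧ β * z ≤ d₂ ∧ d₂ - β * z ≤ s₂ - β * a) ∧ (0 ≤ u ∧ u ≤ c₁) ∧
      ShiftAdmissible β Smax (a - z - α * u) (s₁ + α * c₁ - d₁) (s₂ + α * c₂ - d₂) := by
  obtain ⟨ha₀, has, has₁⟩ := ha
  obtain ⟨z, hz₀, hza, hzd, hzs⟩ := exists_shortfall_cover hβ ha₀ has hd₂ hds
  obtain ⟨u, hu₀, huc, hb₀, hbS⟩ :=
    exists_overflow_release (b := a - z) hα (sub_nonneg.2 hza) hc₁ hs₁' (by linarith)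
  refine ⟨z, u, ⟨hz₀, hza, hzd, hzs⟩, ⟨hu₀, huc⟩, ?_, ?_, ?_⟩
  · linarith
  · nlinarith [mul_nonneg hα hc₂, mul_nonneg hβ (mul_nonneg hα hu₀)]
  · linarith

end Slot

section Policy

variable {α β Smax : ℝ} {k N : ℕ} {E₁ E₂ : ℕ → ℝ} {σ₁ σ₂ : ℝ}
  {w₁ w₂ c₁ c₂ d₁ d₂ x₁₂ x₂₁ s₁ s₂ : ℕ → ℝ}

theorem Feasible.adjust (hα : 0 ≤ α) (hβ : 0 ≤ β) {a z u : ℕ → ℝ}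
    (hF : Feasible α β Smax k N E₁ E₂ σ₁ (σ₂ + β * a k) w₁ w₂ c₁ c₂ d₁ d₂ x₁₂ x₂₁ s₁ s₂)
    (hrec : ∀ t ∈ Icc k N, a (t + 1) = a t - z t - α * u t)
    (hz : ∀ t ∈ Icc k N, 0 ≤ z t ∧ z t ≤ a t ∧ β * z t ≤ d₂ t ∧ d₂ t - β * z t ≤ s₂ t - β * a t)
    (hu : ∀ t ∈ Icc k N, 0 ≤ u t ∧ u t ≤ c₁ t)
    (hadm : ∀ t ∈ Icc k (N + 1), ShiftAdmissible β Smax (a t) (s₁ t) (s₂ t)) :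
    Feasible α β Smax k N E₁ E₂ (σ₁ + a k) σ₂ w₁ w₂
      (fun t => c₁ t - u t) (fun t => c₂ t + β * u t) (fun t => d₁ t + z t)
      (fun t => d₂ t - β * z t) (fun t => x₁₂ t + α * z t + u t) x₂₁
      (fun t => s₁ t + a t) (fun t => s₂ t - β * a t) := by
  obtain ⟨hs₁k, hs₂k, hslot, hbound⟩ := hF
  refine ⟨by simp only [hs₁k], by simp only [hs₂k]; ring, fun t ht => ?_, fun t ht => ?_⟩ <;>
    dsimp only
  · obtain ⟨hw₁, hw₂, hc₁, hc₂, hd₁, hd₂, hx₁₂, hx₂₁, hr₁, hr₂, hds₁, hds₂, he₁, he₂⟩ := hslot t ht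
    obtain ⟨hz₀, hza, hzd, hzs⟩ := hz t ht
    obtain ⟨hu₀, huc⟩ := hu t ht
    obtain ⟨-, has, -⟩ := hadm t (Icc_subset_Icc_right N.le_succ ht)
    refine ⟨hw₁, hw₂, by linarith, by nlinarith, by linarith, by linarith, by nlinarith, hx₂₁,
      ?_, ?_, by linarith, by nlinarith, by linarith, by linarith⟩
    · rw [hrec t ht, hr₁]; ring
    · rw [hrec t ht, hr₂]; ring
  · obtain ⟨hs₁₀, -, -, hs₂S⟩ := hbound t ht
    obtain ⟨ha₀, has, has₁⟩ := hadm t ht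
    exact ⟨by linarith, has₁, by linarith, by nlinarith⟩

theorem Feasible.exists_slot_adjustment (hα : 0 ≤ α) (hβ : 0 ≤ β) {t : ℕ} {a : ℝ}
    (hF : Feasible α β Smax k N E₁ E₂ σ₁ σ₂ w₁ w₂ c₁ c₂ d₁ d₂ x₁₂ x₂₁ s₁ s₂) (ht : t ∈ Icc k N)
    (ha : ShiftAdmissible β Smax a (s₁ t) (s₂ t)) :
    ∃ z u, (0 ≤ z ∧ z ≤ a ∧ β * z ≤ d₂ t ∧ d₂ t - β * z ≤ s₂ t - β * a) ∧ (0 ≤ u ∧ u ≤ c₁ t) ∧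
      ShiftAdmissible β Smax (a - z - α * u) (s₁ (t + 1)) (s₂ (t + 1)) := by
  obtain ⟨-, -, hslot, hbound⟩ := hF
  obtain ⟨-, -, hc₁, hc₂, hd₁, hd₂, -, -, hr₁, hr₂, -, hds₂, -⟩ := hslot t ht
  have hs₁' := (hbound (t + 1) (mem_Icc.2 ⟨by grind, by grind⟩)).2.1
  rw [hr₁] at hs₁' ⊢
  rw [hr₂]
  exact ha.exists_slot_adjustment hα hβ hc₁ hc₂ hd₁ hd₂ hds₂ hs₁'

theorem Feasible.shift_storage (hα : 0 ≤ α) (hβ : 0 ≤ β) (hσ₂ : 0 ≤ σ₂) {a₀ : ℝ}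
    (ha₀ : 0 ≤ a₀) (hcap : σ₁ + a₀ ≤ Smax)
    (hF : Feasible α β Smax k N E₁ E₂ σ₁ (σ₂ + β * a₀) w₁ w₂ c₁ c₂ d₁ d₂ x₁₂ x₂₁ s₁ s₂) :
    ∃ c₁' c₂' d₁' d₂' x₁₂' x₂₁' s₁' s₂' : ℕ → ℝ,
      Feasible α β Smax k N E₁ E₂ (σ₁ + a₀) σ₂ w₁ w₂ c₁' c₂' d₁' d₂' x₁₂' x₂₁' s₁' s₂' := by
  have hstep : ∀ t a, ∃ z u : ℝ, t ∈ Icc k N → ShiftAdmissible β Smax a (s₁ t) (s₂ t) →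
      (0 ≤ z ∧ z ≤ a ∧ β * z ≤ d₂ t ∧ d₂ t - β * z ≤ s₂ t - β * a) ∧ (0 ≤ u ∧ u ≤ c₁ t) ∧
        ShiftAdmissible β Smax (a - z - α * u) (s₁ (t + 1)) (s₂ (t + 1)) := by
    intro t a
    by_cases h : t ∈ Icc k N ∧ ShiftAdmissible β Smax a (s₁ t) (s₂ t)
    · obtain ⟨z, u, hzu⟩ := hF.exists_slot_adjustment hα hβ h.1 h.2
      exact ⟨z, u, fun _ _ => hzu⟩
    · exact ⟨0, 0, fun ht ha => absurd ⟨ht, ha⟩ h⟩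
  obtain ⟨hs₁k, hs₂k, hslot, hbound⟩ := hF
  choose z u hzu using hstep
  let a' : ℕ → ℝ := fun n => Nat.rec a₀ (fun n x => x - z (k + n) x - α * u (k + n) x) n
  let a : ℕ → ℝ := fun t => a' (t - k)
  have hak : a k = a₀ := by simp [a, a']
  have hrec : ∀ t ∈ Icc k N, a (t + 1) = a t - z t (a t) - α * u t (a t) := by
    intro t ht
    obtain ⟨n, rfl⟩ := Nat.exists_eq_add_of_le (mem_Icc.1 ht).1
    simp only [a, a', show k + n + 1 - k = n + 1 by omega, Nat.add_sub_cancel_left]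
  have hadm : ∀ t ∈ Icc k (N + 1), ShiftAdmissible β Smax (a t) (s₁ t) (s₂ t) := by
    intro t ht
    obtain ⟨htk, htN⟩ := mem_Icc.1 ht
    induction t, htk using Nat.le_induction with
    | base => exact ⟨by rwa [hak], by rw [hak, hs₂k]; linarith, by rwa [hak, hs₁k]⟩
    | succ t htk ih =>
      have ht' : t ∈ Icc k N := mem_Icc.2 ⟨htk, by omega⟩
      rw [hrec t ht']
      exact (hzu t (a t) ht' (ih (mem_Icc.2 ⟨htk, by omega⟩) (by omega))).2.2
  have hslot' (t : ℕ) (ht : t ∈ Icc k N) :=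
    hzu t (a t) ht (hadm t (Icc_subset_Icc_right N.le_succ ht))
  have hF' := Feasible.adjust hα hβ (a := a) (z := fun t => z t (a t)) (u := fun t => u t (a t))
    ⟨hs₁k, by rw [hs₂k, hak], hslot, hbound⟩ hrec
    (fun t ht => (hslot' t ht).1) (fun t ht => (hslot' t ht).2.1) hadm
  rw [hak] at hF'
  exact ⟨_, _, _, _, _, _, _, _, hF'⟩

end Policy

theorem store_locally_better_general
    (α β Smax : ℝ) (hα : 0 ≤ α ∧ α ≤ 1) (hβ : 0 ≤ β ∧ β ≤ 1)
    (k N : ℕ) (E₁ E₂ : ℕ → ℝ)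
    (σ₁ σ₂ : ℝ) (hσ₁ : 0 ≤ σ₁ ∧ σ₁ ≤ Smax) (hσ₂ : 0 ≤ σ₂ ∧ σ₂ ≤ Smax)
    (Δ : ℝ) (hΔ : 0 ≤ Δ)
    (hcap₁ : σ₁ + α * Δ ≤ Smax) (hcap₂ : σ₂ + α * β * Δ ≤ Smax) :
    Jstar α β Smax k N E₁ E₂ (σ₁ + α * Δ) σ₂ ≤
      Jstar α β Smax k N E₁ E₂ σ₁ (σ₂ + α * β * Δ) := by
  have hαΔ : 0 ≤ α * Δ := mul_nonneg hα.1 hΔ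
  have hσ₂' : 0 ≤ σ₂ + α * β * Δ ∧ σ₂ + α * β * Δ ≤ Smax :=
    ⟨by nlinarith [mul_nonneg hαΔ hβ.1], hcap₂⟩
  rw [Jstar_eq_sInf_costSet, Jstar_eq_sInf_costSet]
  refine csInf_le_csInf costSet_bddBelow (costSet_nonempty hσ₁ hσ₂') ?_
  rintro r ⟨w₁, w₂, c₁, c₂, d₁, d₂, x₁₂, x₂₁, s₁, s₂, hF, rfl⟩
  rw [show σ₂ + α * β * Δ = σ₂ + β * (α * Δ) by ring] at hF
  obtain ⟨c₁', c₂', d₁', d₂', x₁₂', x₂₁', s₁', s₂', hF'⟩ :=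
    hF.shift_storage hα.1 hβ.1 hσ₂.1 hαΔ hcap₁
  exact ⟨w₁, w₂, c₁', c₂', d₁', d₂', x₁₂', x₂₁', s₁', s₂', hF', rfl⟩

/-- Proposition 3, Case 1: storing excess energy locally is at least as
good as transferring it to the other base station's storage. -/
theorem store_locally_better
    (α β Smax : ℝ) (hα : 0 ≤ α ∧ α ≤ 1) (hβ : 0 ≤ β ∧ β ≤ 1) (hS : 0 < Smax)
    (k N : ℕ) (hkN : k ≤ N) (E₁ E₂ : ℕ → ℝ)
    (σ₁ σ₂ : ℝ) (hσ₁ : 0 ≤ σ₁ ∧ σ₁ ≤ Smax) (hσ₂ : 0 ≤ σ₂ ∧ σ₂ ≤ Smax)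
    (Δ : ℝ) (hΔ : 0 ≤ Δ)
    (hcap₁ : σ₁ + α * Δ ≤ Smax) (hcap₂ : σ₂ + α * β * Δ ≤ Smax) :
    Jstar α β Smax k N E₁ E₂ (σ₁ + α * Δ) σ₂ ≤
      Jstar α β Smax k N E₁ E₂ σ₁ (σ₂ + α * β * Δ) :=
  store_locally_better_general α β Smax hα hβ k N E₁ E₂ σ₁ σ₂ hσ₁ hσ₂ Δ hΔ hcap₁ hcap₂
end

section
/- (Charging BS 1's storage while draining BS 2's storage does not improve the optimal cost when β > α.) Suppose 0 < α < β ≤ 1 and Δ ≥ 0 satisfy σ₁ + α·Δ ≤ S_max and β·Δ/α ≤ σ₂. Then J*_k(σ₁, σ₂) ≤ J*_k(σ₁ + α·Δ, σ₂ − β·Δ/α). -/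
def SlotFeasible (α β e₁ e₂ w₁ w₂ c₁ c₂ d₁ d₂ x₁₂ x₂₁ s₁ s₂ s₁' s₂' : ℝ) : Prop :=
  0 ≤ w₁ ∧ 0 ≤ w₂ ∧ 0 ≤ c₁ ∧ 0 ≤ c₂ ∧ 0 ≤ d₁ ∧ 0 ≤ d₂ ∧ 0 ≤ x₁₂ ∧ 0 ≤ x₂₁ ∧
    s₁' = s₁ + α * c₁ - d₁ ∧ s₂' = s₂ + α * c₂ - d₂ ∧ d₁ ≤ s₁ ∧ d₂ ≤ s₂ ∧
    0 ≤ e₁ + w₁ - c₁ + α * d₁ - x₁₂ + β * x₂₁ ∧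
    0 ≤ e₂ + w₂ - c₂ + α * d₂ - x₂₁ + β * x₁₂

theorem feasible_iff {α β Smax : ℝ} {k N : ℕ} {E₁ E₂ : ℕ → ℝ} {σ₁ σ₂ : ℝ}
    {w₁ w₂ c₁ c₂ d₁ d₂ x₁₂ x₂₁ s₁ s₂ : ℕ → ℝ} :
    Feasible α β Smax k N E₁ E₂ σ₁ σ₂ w₁ w₂ c₁ c₂ d₁ d₂ x₁₂ x₂₁ s₁ s₂ ↔
      s₁ k = σ₁ ∧ s₂ k = σ₂ ∧
      (∀ t ∈ Finset.Icc k N, SlotFeasible α β (E₁ t) (E₂ t) (w₁ t) (w₂ t) (c₁ t) (c₂ t)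
        (d₁ t) (d₂ t) (x₁₂ t) (x₂₁ t) (s₁ t) (s₂ t) (s₁ (t + 1)) (s₂ (t + 1))) ∧
      (∀ t ∈ Finset.Icc k (N + 1), 0 ≤ s₁ t ∧ s₁ t ≤ Smax ∧ 0 ≤ s₂ t ∧ s₂ t ≤ Smax) :=
  Iff.rfl

theorem feasible_idle {α β Smax : ℝ} {k N : ℕ} (E₁ E₂ : ℕ → ℝ) {σ₁ σ₂ : ℝ}
    (hσ₁ : 0 ≤ σ₁ ∧ σ₁ ≤ Smax) (hσ₂ : 0 ≤ σ₂ ∧ σ₂ ≤ Smax) :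
    Feasible α β Smax k N E₁ E₂ σ₁ σ₂ (fun t => max (-E₁ t) 0) (fun t => max (-E₂ t) 0)
      0 0 0 0 0 0 (fun _ => σ₁) (fun _ => σ₂) := by
  refine feasible_iff.2 ⟨rfl, rfl, fun t _ => ?_, fun _ _ => ⟨hσ₁.1, hσ₁.2, hσ₂.1, hσ₂.2⟩⟩
  have h₁ := le_max_left (-E₁ t) 0
  have h₂ := le_max_left (-E₂ t) 0
  refine ⟨le_max_right _ _, le_max_right _ _, le_rfl, le_rfl, le_rfl, le_rfl, le_rfl, le_rfl,
    ?_, ?_, hσ₁.1, hσ₂.1, ?_, ?_⟩ <;>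
    simp only [Pi.zero_apply, mul_zero, sub_zero, add_zero] <;> linarith

theorem Jstar_le_Jstar_of_forall_feasible {α β Smax : ℝ} {k N : ℕ} {E₁ E₂ : ℕ → ℝ}
    {σ₁ σ₂ τ₁ τ₂ : ℝ} (hτ₁ : 0 ≤ τ₁ ∧ τ₁ ≤ Smax) (hτ₂ : 0 ≤ τ₂ ∧ τ₂ ≤ Smax)
    (h : ∀ w₁ w₂ c₁ c₂ d₁ d₂ x₁₂ x₂₁ s₁ s₂ : ℕ → ℝ,
      Feasible α β Smax k N E₁ E₂ τ₁ τ₂ w₁ w₂ c₁ c₂ d₁ d₂ x₁₂ x₂₁ s₁ s₂ →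
        ∃ c₁' c₂' d₁' d₂' x₁₂' x₂₁' s₁' s₂' : ℕ → ℝ,
          Feasible α β Smax k N E₁ E₂ σ₁ σ₂ w₁ w₂ c₁' c₂' d₁' d₂' x₁₂' x₂₁' s₁' s₂') :
    Jstar α β Smax k N E₁ E₂ σ₁ σ₂ ≤ Jstar α β Smax k N E₁ E₂ τ₁ τ₂ := by
  refine csInf_le_csInf ⟨0, ?_⟩
    ⟨_, _, _, _, _, _, _, _, _, _, _, feasible_idle E₁ E₂ hτ₁ hτ₂, rfl⟩ ?_
  · rintro r ⟨w₁, w₂, _, _, _, _, _, _, _, _, hf, rfl⟩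
    obtain ⟨-, -, hslot, -⟩ := feasible_iff.1 hf
    exact Finset.sum_nonneg fun t ht => add_nonneg (hslot t ht).1 (hslot t ht).2.1
  · rintro r ⟨w₁, w₂, c₁, c₂, d₁, d₂, x₁₂, x₂₁, s₁, s₂, hf, rfl⟩
    obtain ⟨c₁', c₂', d₁', d₂', x₁₂', x₂₁', s₁', s₂', hf'⟩ := h _ _ _ _ _ _ _ _ _ _ hf
    exact ⟨w₁, w₂, c₁', c₂', d₁', d₂', x₁₂', x₂₁', s₁', s₂', hf', rfl⟩

/-- `a` is BS 1's storage deficit and `b` BS 2's storage surplus of a corrected policy relative to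
a policy with storage `(s₁, s₂)`. -/
def GapInvariant (β Smax a b s₁ s₂ : ℝ) : Prop :=
  0 ≤ a ∧ a ≤ β * b ∧ a ≤ s₁ ∧ s₂ + b ≤ Smax

section OneSlot

variable {α β Smax e₁ e₂ w₁ w₂ c₁ c₂ d₁ d₂ x₁₂ x₂₁ s₁ s₂ s₁' s₂' a b m v g : ℝ}

theorem SlotFeasible.correct
    (h : SlotFeasible α β e₁ e₂ w₁ w₂ c₁ c₂ d₁ d₂ x₁₂ x₂₁ s₁ s₂ s₁' s₂')
    (hα : 0 < α) (hβ : 0 < β) (hm : 0 ≤ m) (hmd : m ≤ d₁) (hds : d₁ - m ≤ s₁ - a)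
    (hmb : m ≤ β * b) (hvc : v ≤ α * c₂) (hg : 0 ≤ g) (hgv : α * g ≤ v) :
    SlotFeasible α β e₁ e₂ w₁ w₂ (c₁ + β * g) (c₂ - v / α) (d₁ - m) (d₂ + m / β) x₁₂
      (x₂₁ + α * m / β + g) (s₁ - a) (s₂ + b)
      (s₁' - (a - m - α * β * g)) (s₂' + (b - m / β - v)) := by
  obtain ⟨hw₁, hw₂, hc₁, hc₂, hd₁, hd₂, hx₁₂, hx₂₁, hs₁', hs₂', hds₁, hds₂, he₁, he₂⟩ := h
  have hmb' : m / β ≤ b := (div_le_iff₀' hβ).2 hmb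
  have hvc' : v / α ≤ c₂ := (div_le_iff₀' hα).2 hvc
  have hgv' : g ≤ v / α := (le_div_iff₀' hα).2 hgv
  refine ⟨hw₁, hw₂, by positivity, by linarith, by linarith, by positivity, hx₁₂,
    by positivity, by rw [hs₁']; ring, ?_, hds, by linarith, ?_, ?_⟩
  · rw [hs₂']; field_simp; ring
  · convert he₁ using 1; field_simp; ring
  · have : e₂ + w₂ - (c₂ - v / α) + α * (d₂ + m / β) - (x₂₁ + α * m / β + g) + β * x₁₂ =
        e₂ + w₂ - c₂ + α * d₂ - x₂₁ + β * x₁₂ + (v / α - g) := by ring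
    linarith

theorem GapInvariant.storage_mem (hI : GapInvariant β Smax a b s₁ s₂) (hβ : 0 < β)
    (hs₁ : s₁ ≤ Smax) (hs₂ : 0 ≤ s₂) :
    0 ≤ s₁ - a ∧ s₁ - a ≤ Smax ∧ 0 ≤ s₂ + b ∧ s₂ + b ≤ Smax := by
  obtain ⟨ha, hab, has, hbs⟩ := hI
  have hb : 0 ≤ b := nonneg_of_mul_nonneg_right (ha.trans hab) hβ
  exact ⟨by linarith, by linarith, by linarith, hbs⟩

theorem GapInvariant.step (hα : 0 < α) (hβ : 0 < β) (hI : GapInvariant β Smax a b s₁ s₂)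
    (h : SlotFeasible α β e₁ e₂ w₁ w₂ c₁ c₂ d₁ d₂ x₁₂ x₂₁ s₁ s₂ s₁' s₂')
    (hs₁' : 0 ≤ s₁') (hs₂' : s₂' ≤ Smax)
    (hm : m = min a d₁) (hv : v = max 0 (s₂' + b - m / β - Smax))
    (hg : g = min (v / α) ((a - m) / (α * β))) :
    (0 ≤ m ∧ m ≤ d₁ ∧ d₁ - m ≤ s₁ - a ∧ m ≤ β * b ∧ v ≤ α * c₂ ∧ 0 ≤ g ∧ α * g ≤ v) ∧
      GapInvariant β Smax (a - m - α * β * g) (b - m / β - v) s₁' s₂' := by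
  obtain ⟨ha, hab, has, hbs⟩ := hI
  obtain ⟨-, -, hc₁, hc₂, hd₁, hd₂, -, -, hs₁'_eq, hs₂'_eq, hds₁, -, -, -⟩ := h
  have hma : m ≤ a := hm ▸ min_le_left _ _
  have hmd : m ≤ d₁ := hm ▸ min_le_right _ _
  have hmb : m / β ≤ b := (div_le_iff₀' hβ).2 (hma.trans hab)
  have hm0 : 0 ≤ m := hm ▸ le_min ha hd₁
  have hm0' : 0 ≤ m / β := by positivity
  have hv0 : 0 ≤ v := hv ▸ le_max_left _ _
  have hv_over : s₂' + b - m / β - Smax ≤ v := hv ▸ le_max_right _ _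
  have hvb : v ≤ b - m / β := hv ▸ max_le (by linarith) (by linarith)
  have hgv : g ≤ v / α := hg ▸ min_le_left _ _
  have hga : α * β * g ≤ a - m := by
    rw [← le_div_iff₀' (by positivity)]; exact hg ▸ min_le_right _ _
  have hg0 : 0 ≤ g := hg ▸ le_min (by positivity) (div_nonneg (by linarith) (by positivity))
  refine ⟨⟨hm0, hmd, ?_, hma.trans hab, ?_, hg0, (le_div_iff₀' hα).1 hgv⟩,
    by linarith, ?_, ?_, by linarith⟩
  · rcases min_cases a d₁ with ⟨hm', -⟩ | ⟨hm', -⟩ <;> rw [hm, hm'] <;> linarith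
  · rw [hv]; refine max_le (by positivity) ?_; rw [hs₂'_eq]; linarith
  · have hb' : β * (b - m / β - v) = β * b - m - β * v := by field_simp
    rcases min_cases (v / α) ((a - m) / (α * β)) with ⟨hg', -⟩ | ⟨hg', -⟩ <;> rw [hg, hg']
    · have : α * β * (v / α) = β * v := by field_simp
      linarith
    · have : α * β * ((a - m) / (α * β)) = a - m := by field_simp
      linarith [mul_nonneg hβ.le (sub_nonneg.2 hvb)]
  · have : 0 ≤ α * β * g := by positivity
    rcases min_cases a d₁ with ⟨hm', -⟩ | ⟨hm', -⟩ <;> rw [hm'] at hm <;> subst hm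
    · linarith
    · have : 0 ≤ α * c₁ := by positivity
      linarith

end OneSlot

noncomputable def gapSeq (α β Smax : ℝ) (k : ℕ) (d₁ s₂ : ℕ → ℝ) (a₀ b₀ : ℝ) : ℕ → ℝ × ℝ
  | 0 => (a₀, b₀)
  | n + 1 =>
    let p := gapSeq α β Smax k d₁ s₂ a₀ b₀ n
    let m := min p.1 (d₁ (k + n))
    let v := max 0 (s₂ (k + n + 1) + p.2 - m / β - Smax)
    let g := min (v / α) ((p.1 - m) / (α * β))
    (p.1 - m - α * β * g, p.2 - m / β - v)

theorem Feasible.of_shift {α β Smax : ℝ} {k N : ℕ} {E₁ E₂ : ℕ → ℝ} {σ₁ σ₂ a₀ b₀ : ℝ}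
    {w₁ w₂ c₁ c₂ d₁ d₂ x₁₂ x₂₁ s₁ s₂ : ℕ → ℝ} (hα : 0 < α) (hβ : 0 < β)
    (hσ₁ : 0 ≤ σ₁) (hσ₂ : σ₂ ≤ Smax) (ha₀ : 0 ≤ a₀) (hab₀ : a₀ ≤ β * b₀)
    (h : Feasible α β Smax k N E₁ E₂ (σ₁ + a₀) (σ₂ - b₀) w₁ w₂ c₁ c₂ d₁ d₂ x₁₂ x₂₁ s₁ s₂) :
    ∃ c₁' c₂' d₁' d₂' x₁₂' x₂₁' s₁' s₂' : ℕ → ℝ,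
      Feasible α β Smax k N E₁ E₂ σ₁ σ₂ w₁ w₂ c₁' c₂' d₁' d₂' x₁₂' x₂₁' s₁' s₂' := by
  obtain ⟨hs₁k, hs₂k, hslot, hbd⟩ := feasible_iff.1 h
  let q : ℕ → ℝ × ℝ := fun t => gapSeq α β Smax k d₁ s₂ a₀ b₀ (t - k)
  let m : ℕ → ℝ := fun t => min (q t).1 (d₁ t)
  let v : ℕ → ℝ := fun t => max 0 (s₂ (t + 1) + (q t).2 - m t / β - Smax)
  let g : ℕ → ℝ := fun t => min (v t / α) (((q t).1 - m t) / (α * β))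
  have hq : ∀ t, k ≤ t →
      q (t + 1) = ((q t).1 - m t - α * β * g t, (q t).2 - m t / β - v t) := by
    intro t ht
    obtain ⟨n, rfl⟩ := Nat.exists_eq_add_of_le ht
    simp only [q, m, v, g, show k + n + 1 - k = n + 1 by omega, Nat.add_sub_cancel_left]
    rfl
  have hinv : ∀ t, k ≤ t → t ≤ N + 1 → GapInvariant β Smax (q t).1 (q t).2 (s₁ t) (s₂ t) := by
    intro t ht
    induction t, ht using Nat.le_induction with
    | base =>
      intro _
      simp only [q, Nat.sub_self, gapSeq, hs₁k, hs₂k]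
      exact ⟨ha₀, hab₀, by linarith, by linarith⟩
    | succ t ht ih =>
      intro htN
      obtain ⟨hs₁', -, -, hs₂'⟩ := hbd (t + 1) (Finset.mem_Icc.2 ⟨by omega, htN⟩)
      rw [hq t ht]
      exact ((ih (by omega)).step hα hβ (hslot t (Finset.mem_Icc.2 ⟨ht, by omega⟩))
        hs₁' hs₂' rfl rfl rfl).2
  refine ⟨fun t => c₁ t + β * g t, fun t => c₂ t - v t / α, fun t => d₁ t - m t,
    fun t => d₂ t + m t / β, x₁₂, fun t => x₂₁ t + α * m t / β + g t,
    fun t => s₁ t - (q t).1, fun t => s₂ t + (q t).2,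
    feasible_iff.2 ⟨?_, ?_, fun t ht => ?_, fun t ht => ?_⟩⟩
  · simp [q, gapSeq, hs₁k]
  · simp [q, gapSeq, hs₂k]
  · obtain ⟨hkt, htN⟩ := Finset.mem_Icc.1 ht
    obtain ⟨hs₁', -, -, hs₂'⟩ := hbd (t + 1) (Finset.mem_Icc.2 ⟨by omega, by omega⟩)
    obtain ⟨⟨hm, hmd, hds, hmb, hvc, hg, hgv⟩, -⟩ :=
      (hinv t hkt (by omega)).step hα hβ (hslot t ht) hs₁' hs₂' rfl rfl rfl
    rw [hq t hkt]
    exact (hslot t ht).correct hα hβ hm hmd hds hmb hvc hg hgv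
  · obtain ⟨hkt, htN⟩ := Finset.mem_Icc.1 ht
    obtain ⟨-, hs₁, hs₂, -⟩ := hbd t ht
    exact (hinv t hkt htN).storage_mem hβ hs₁ hs₂

theorem charge_one_drain_two_not_better_general
    (α β Smax : ℝ) (hα : 0 < α) (hαβ : α < β)
    (k N : ℕ) (E₁ E₂ : ℕ → ℝ)
    (σ₁ σ₂ : ℝ) (hσ₁ : 0 ≤ σ₁ ∧ σ₁ ≤ Smax) (hσ₂ : 0 ≤ σ₂ ∧ σ₂ ≤ Smax)
    (Δ : ℝ) (hΔ : 0 ≤ Δ)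
    (hcap₁ : σ₁ + α * Δ ≤ Smax) (hcap₂ : β * Δ / α ≤ σ₂) :
    Jstar α β Smax k N E₁ E₂ σ₁ σ₂ ≤
      Jstar α β Smax k N E₁ E₂ (σ₁ + α * Δ) (σ₂ - β * Δ / α) := by
  have hβ : 0 < β := hα.trans hαβ
  have hαΔ : 0 ≤ α * Δ := by positivity
  have hβΔ : 0 ≤ β * Δ / α := by positivity
  have hgap : α * Δ ≤ β * (β * Δ / α) := by
    rw [mul_div_assoc', le_div_iff₀ hα]
    nlinarith [mul_le_mul hαβ.le hαβ.le hα.le hβ.le]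
  exact Jstar_le_Jstar_of_forall_feasible ⟨by linarith, hcap₁⟩ ⟨by linarith, by linarith⟩
    fun _ _ _ _ _ _ _ _ _ _ h => h.of_shift hα hβ hσ₁.1 hσ₂.2 hαΔ hgap

/-- charging BS 1's storage while draining BS 2's storage does not
improve the optimal cost when `β > α`. -/
theorem charge_one_drain_two_not_better
    (α β Smax : ℝ) (hα : 0 < α) (hαβ : α < β) (hβ : β ≤ 1) (hS : 0 < Smax)
    (k N : ℕ) (hkN : k ≤ N) (E₁ E₂ : ℕ → ℝ)
    (σ₁ σ₂ : ℝ) (hσ₁ : 0 ≤ σ₁ ∧ σ₁ ≤ Smax) (hσ₂ : 0 ≤ σ₂ ∧ σ₂ ≤ Smax)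
    (Δ : ℝ) (hΔ : 0 ≤ Δ)
    (hcap₁ : σ₁ + α * Δ ≤ Smax) (hcap₂ : β * Δ / α ≤ σ₂) :
    Jstar α β Smax k N E₁ E₂ σ₁ σ₂ ≤
      Jstar α β Smax k N E₁ E₂ (σ₁ + α * Δ) (σ₂ - β * Δ / α) :=
  charge_one_drain_two_not_better_general α β Smax hα hαβ k N E₁ E₂ σ₁ σ₂ hσ₁ hσ₂ Δ hΔ hcap₁ hcap₂
end
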